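/- arXiv:1407.7576 — 4 statements merged into one kernel-verified Lean document; each statement's English description precedes it below -/
import Mathlib

section
/- Let k be an algebraically closed field, M a k-vector space, and λ, μ ∈ k. Let f(x,y) = Σ_{i,j ≥ 0} α_{ij} x^i y^j ∈ k[x,y] satisfy f(λ, μ) ≠ 0. Let W_λ be an m×m upper triangular matrix over k all of whose diagonal entries equal λ, and W_μ an n×n upper triangular matrix over k all of whose diagonal entries equal μ (for instance, Weyr matrices of eigenvalues λ and μ). Let V = (v_{rs}) be an m×n matrix with entries in M such that the family {v_{rs} : 1 ≤ r ≤ m, 1 ≤ s ≤ n} is linearly independent over k. Set (u_{pq}) = f(W_λ, W_μ)V = Σ_{i,j ≥ 0} α_{ij} W_λ^i V W_μ^j. Then the family {u_{pq} : 1 ≤ p ≤ m, 1 ≤ q ≤ n} is linearly independent over k. -/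
/-!
Read `U = f(W_λ, W_μ) V` entrywise as `U = P V`, where `P = ∑ α_ij W_λ ^ i ⊗ (W_μ ^ j)ᵀ` is the
matrix of `X ↦ f(W_λ, W_μ) X` on `m × n` matrices. Ordering the index pairs `(p, q)`
lexicographically with `p` increasing and `q` decreasing makes every Kronecker factor, hence `P`,
upper triangular with constant diagonal `f(λ, μ)`. So `det P = f(λ, μ) ^ (m n) ≠ 0`, and an
invertible coefficient matrix preserves linear independence.
-/

open Function OrderDual
open scoped Kronecker nonZeroDivisors

theorem LinearIndependent.sum_smul_of_det_mem_nonZeroDivisors {ι R M : Type*} [CommRing R]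
    [AddCommGroup M] [Module R M] [Fintype ι] [DecidableEq ι] {v : ι → M}
    (hv : LinearIndependent R v) {A : Matrix ι ι R} (hA : A.det ∈ R⁰) :
    LinearIndependent R fun i => ∑ j, A i j • v j := by
  rw [Fintype.linearIndependent_iff] at hv ⊢
  intro g hg
  refine congrFun (Matrix.eq_zero_of_det_mem_nonZeroDivisors_of_vecMul_eq_zero hA
    (funext <| hv _ ?_))
  simp only [Matrix.vecMul, dotProduct, Finset.sum_smul, Finset.smul_sum, smul_smul] at hg ⊢
  rw [Finset.sum_comm]
  exact hg

namespace Matrix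

variable {m n R : Type*}

theorem BlockTriangular.det_of_injective [CommRing R] [Fintype m] [DecidableEq m] {α : Type*}
    [LinearOrder α] {M : Matrix m m R} {b : m → α} (hM : M.BlockTriangular b) (hb : Injective b) :
    M.det = ∏ i, M i i :=
  letI := LinearOrder.lift' b hb
  det_of_isUpperTriangular hM

theorem BlockTriangular.kronecker [MulZeroClass R] {α β : Type*} [LT α] [LT β]
    {A : Matrix m m R} {B : Matrix n n R} {a : m → α} {b : n → β}
    (hA : A.BlockTriangular a) (hB : B.BlockTriangular b) :
    (A ⊗ₖ B).BlockTriangular fun i => toLex (a i.1, b i.2) := by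
  rintro ⟨i₁, i₂⟩ ⟨j₁, j₂⟩ h
  rw [kronecker_apply]
  rcases Prod.Lex.toLex_lt_toLex.1 h with h | ⟨-, h⟩
  · rw [hA h, zero_mul]
  · rw [hB h, mul_zero]

theorem IsUpperTriangular.mul_apply_self [Fintype m] [LinearOrder m]
    [NonUnitalNonAssocSemiring R] {A B : Matrix m m R} (hA : A.IsUpperTriangular)
    (hB : B.IsUpperTriangular) (i : m) :
    (A * B) i i = A i i * B i i := by
  rw [mul_apply, Finset.sum_eq_single i]
  · intro j _ hj
    rcases hj.lt_or_gt with h | h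
    · rw [hA h, zero_mul]
    · rw [hB h, mul_zero]
  · simp

theorem IsUpperTriangular.pow_apply_self [Fintype m] [DecidableEq m] [LinearOrder m] [Semiring R]
    {A : Matrix m m R} (hA : A.IsUpperTriangular) (k : ℕ) (i : m) :
    (A ^ k) i i = A i i ^ k := by
  induction k with
  | zero => simp
  | succ k ih => rw [pow_succ, IsUpperTriangular.mul_apply_self (hA.pow k) hA, ih, pow_succ]

/-- The matrix of `X ↦ f(A, B) X = ∑ α_ij • A ^ i * X * B ^ j` on `m × n` matrices `X`, in the
coordinates `X r s`; the polynomial `f` is given by its coefficients `α`. -/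
def polyKronecker [CommSemiring R] [Fintype m] [DecidableEq m] [Fintype n] [DecidableEq n]
    (α : ℕ × ℕ →₀ R) (A : Matrix m m R) (B : Matrix n n R) : Matrix (m × n) (m × n) R :=
  α.sum fun ij c => c • ((A ^ ij.1) ⊗ₖ (B ^ ij.2)ᵀ)

section PolyKronecker

variable [CommSemiring R] [Fintype m] [DecidableEq m] [Fintype n] [DecidableEq n]
  (α : ℕ × ℕ →₀ R)

theorem polyKronecker_apply (A : Matrix m m R) (B : Matrix n n R) (i j : m × n) :
    polyKronecker α A B i j = α.sum fun ij c => c * ((A ^ ij.1) i.1 j.1 * (B ^ ij.2) j.2 i.2) := by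
  simp only [polyKronecker, Finsupp.sum, sum_apply, smul_apply, kroneckerMap_apply,
    transpose_apply, smul_eq_mul]

theorem sum_polyKronecker_smul {M : Type*} [AddCommMonoid M] [Module R M]
    (A : Matrix m m R) (B : Matrix n n R) (V : Matrix m n M) (p : m) (q : n) :
    ∑ rs : m × n, polyKronecker α A B (p, q) rs • V rs.1 rs.2 =
      α.sum fun ij c => c • ∑ r, ∑ s, ((A ^ ij.1) p r * (B ^ ij.2) s q) • V r s := by
  simp only [polyKronecker_apply, Finsupp.sum, Finset.sum_smul, Finset.smul_sum, smul_smul,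
    Fintype.sum_prod_type]
  exact (Finset.sum_congr rfl fun _ _ => Finset.sum_comm).trans Finset.sum_comm

variable [LinearOrder m] [LinearOrder n] {A : Matrix m m R} {B : Matrix n n R}

theorem IsUpperTriangular.blockTriangular_polyKronecker (hA : A.IsUpperTriangular)
    (hB : B.IsUpperTriangular) :
    (polyKronecker α A B).BlockTriangular fun i => toLex (i.1, toDual i.2) := by
  intro i j h
  rw [polyKronecker_apply, Finsupp.sum]
  refine Finset.sum_eq_zero fun ij _ => ?_
  have hK := (hA.pow ij.1).kronecker (hB.pow ij.2).transpose h
  rw [kronecker_apply, transpose_apply] at hK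
  rw [hK, mul_zero]

theorem IsUpperTriangular.polyKronecker_apply_self (hA : A.IsUpperTriangular)
    (hB : B.IsUpperTriangular) (i : m) (j : n) :
    polyKronecker α A B (i, j) (i, j) = α.sum fun ij c => c * A i i ^ ij.1 * B j j ^ ij.2 := by
  simp only [polyKronecker_apply, hA.pow_apply_self, hB.pow_apply_self, mul_assoc]

end PolyKronecker

end Matrix

open Matrix

theorem linearIndependent_of_weyr_transform_general
    (k : Type*) [Field k]
    (M : Type*) [AddCommGroup M] [Module k M]
    (m n : ℕ) (lam mu : k)
    (α : ℕ × ℕ →₀ k)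
    (hf : (α.sum fun ij c => c * lam ^ ij.1 * mu ^ ij.2) ≠ 0)
    (Wl : Matrix (Fin m) (Fin m) k)
    (hWl_tri : ∀ i j : Fin m, j < i → Wl i j = 0)
    (hWl_diag : ∀ i : Fin m, Wl i i = lam)
    (Wm : Matrix (Fin n) (Fin n) k)
    (hWm_tri : ∀ i j : Fin n, j < i → Wm i j = 0)
    (hWm_diag : ∀ i : Fin n, Wm i i = mu)
    (V : Matrix (Fin m) (Fin n) M)
    (hV : LinearIndependent k fun rs : Fin m × Fin n => V rs.1 rs.2)
    (U : Matrix (Fin m) (Fin n) M)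
    (hU : ∀ (p : Fin m) (q : Fin n), U p q = α.sum fun ij c =>
      c • ∑ r : Fin m, ∑ s : Fin n, ((Wl ^ ij.1) p r * (Wm ^ ij.2) s q) • V r s) :
    LinearIndependent k fun pq : Fin m × Fin n => U pq.1 pq.2 := by
  have hWl : Wl.IsUpperTriangular := fun i j => hWl_tri i j
  have hWm : Wm.IsUpperTriangular := fun i j => hWm_tri i j
  have hdet : (polyKronecker α Wl Wm).det ≠ 0 := by
    have hinj : Injective fun i : Fin m × Fin n => toLex (i.1, toDual i.2) :=
      fun i j h => by simpa [Prod.ext_iff] using h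
    rw [(hWl.blockTriangular_polyKronecker α hWm).det_of_injective hinj]
    refine Finset.prod_ne_zero_iff.2 fun pq _ => ?_
    rwa [hWl.polyKronecker_apply_self α hWm, hWl_diag, hWm_diag]
  have hUV : (fun pq : Fin m × Fin n => U pq.1 pq.2) =
      fun pq => ∑ rs, polyKronecker α Wl Wm pq rs • V rs.1 rs.2 :=
    funext fun pq => by rw [hU, sum_polyKronecker_smul]
  rw [hUV]
  exact hV.sum_smul_of_det_mem_nonZeroDivisors (mem_nonZeroDivisors_of_ne_zero hdet)

/-- Let `k` be an algebraically closed field, `M` a `k`-vector space, `lam, mu ∈ k`, and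
`f(x,y) = Σ_{i,j} α_{ij} x^i y^j ∈ k[x,y]` (encoded by its finitely supported family of
coefficients `α`) with `f(lam, mu) ≠ 0`. Let `Wl` be an `m × m` upper triangular matrix
over `k` with all diagonal entries equal to `lam`, and `Wm` an `n × n` upper triangular
matrix with all diagonal entries equal to `mu`. If `V = (v_{rs})` is an `m × n` matrix with
entries in `M` whose entries are linearly independent over `k`, then the entries of
`U = f(Wl, Wm)V = Σ_{i,j} α_{ij} Wl^i V Wm^j` are also linearly independent over `k`. -/
theorem linearIndependent_of_weyr_transform
    (k : Type*) [Field k] [IsAlgClosed k]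
    (M : Type*) [AddCommGroup M] [Module k M]
    (m n : ℕ) (lam mu : k)
    (α : ℕ × ℕ →₀ k)
    (hf : (α.sum fun ij c => c * lam ^ ij.1 * mu ^ ij.2) ≠ 0)
    (Wl : Matrix (Fin m) (Fin m) k)
    (hWl_tri : ∀ i j : Fin m, j < i → Wl i j = 0)
    (hWl_diag : ∀ i : Fin m, Wl i i = lam)
    (Wm : Matrix (Fin n) (Fin n) k)
    (hWm_tri : ∀ i j : Fin n, j < i → Wm i j = 0)
    (hWm_diag : ∀ i : Fin n, Wm i i = mu)
    (V : Matrix (Fin m) (Fin n) M)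
    (hV : LinearIndependent k fun rs : Fin m × Fin n => V rs.1 rs.2)
    (U : Matrix (Fin m) (Fin n) M)
    (hU : ∀ (p : Fin m) (q : Fin n), U p q = α.sum fun ij c =>
      c • ∑ r : Fin m, ∑ s : Fin n, ((Wl ^ ij.1) p r * (Wm ^ ij.2) s q) • V r s) :
    LinearIndependent k fun pq : Fin m × Fin n => U pq.1 pq.2 :=
  linearIndependent_of_weyr_transform_general k M m n lam mu α hf Wl hWl_tri hWl_diag Wm hWm_tri
    hWm_diag V hV U hU
end

section
/- Let k be an algebraically closed field, M a k-vector space, and λ, μ ∈ k. Let f(x,y) = Σ_{i,j ≥ 0} α_{ij} x^i y^j ∈ k[x,y]. Let W_λ be an m×m upper triangular matrix over k all of whose diagonal entries equal λ, and W_μ an n×n upper triangular matrix over k all of whose diagonal entries equal μ. Let V = (v_{rs}) be an m×n matrix with entries in M, and set (u_{pq}) = f(W_λ, W_μ)V = Σ_{i,j ≥ 0} α_{ij} W_λ^i V W_μ^j. Then for every position (p,q), the element u_{pq} − f(λ,μ) • v_{pq} lies in the k-linear span of the set {v_{rs} : r ≥ p, s ≤ q, (r,s) ≠ (p,q)}.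 -/
lemma tri_pow_aux {k : Type*} [Field k] {m : ℕ} {lam : k}
    (W : Matrix (Fin m) (Fin m) k)
    (htri : ∀ i j : Fin m, j < i → W i j = 0)
    (hdiag : ∀ i : Fin m, W i i = lam) (i : ℕ) :
    (∀ p r : Fin m, r < p → (W ^ i) p r = 0) ∧ (∀ p : Fin m, (W ^ i) p p = lam ^ i) := by
  induction i with
  | zero => simp [Matrix.one_apply]; intro p r h; exact fun e => absurd e h.ne'
  | succ i ih =>
    obtain ⟨ih1, ih2⟩ := ih
    have key : ∀ p r : Fin m, (W ^ (i+1)) p r = ∑ t, (W ^ i) p t * W t r := by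
      intro p r; rw [pow_succ]; rfl
    constructor
    · intro p r hrp
      rw [key, Finset.sum_eq_zero]
      intro t _
      rcases lt_or_ge t p with h | h
      · rw [ih1 p t h, zero_mul]
      · rw [htri t r (hrp.trans_le h), mul_zero]
    · intro p
      rw [key, Finset.sum_eq_single p]
      · rw [ih2, hdiag, pow_succ]
      · intro t _ ht
        rcases lt_or_ge t p with h | h
        · rw [ih1 p t h, zero_mul]
        · rw [htri t p (lt_of_le_of_ne h ht.symm), mul_zero]
      · simp


/-- Let `k` be an algebraically closed field, `M` a `k`-vector space, `lam, mu ∈ k`, and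
`f(x,y) = Σ_{i,j} α_{ij} x^i y^j ∈ k[x,y]` (encoded by its finitely supported family of
coefficients `α`). Let `Wl` be an `m × m` upper triangular matrix over `k` with all
diagonal entries equal to `lam`, and `Wm` an `n × n` upper triangular matrix with all
diagonal entries equal to `mu`. Let `V` be an `m × n` matrix with entries in `M` and set
`U = f(Wl, Wm)V = Σ_{i,j} α_{ij} Wl^i V Wm^j`. Then for every position `(p,q)`, the
element `U p q - f(lam,mu) • V p q` lies in the `k`-linear span of
`{V r s : r ≥ p, s ≤ q, (r,s) ≠ (p,q)}`. -/
theorem weyr_transform_entry_span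
    (k : Type*) [Field k] [IsAlgClosed k]
    (M : Type*) [AddCommGroup M] [Module k M]
    (m n : ℕ) (lam mu : k)
    (α : ℕ × ℕ →₀ k)
    (Wl : Matrix (Fin m) (Fin m) k)
    (hWl_tri : ∀ i j : Fin m, j < i → Wl i j = 0)
    (hWl_diag : ∀ i : Fin m, Wl i i = lam)
    (Wm : Matrix (Fin n) (Fin n) k)
    (hWm_tri : ∀ i j : Fin n, j < i → Wm i j = 0)
    (hWm_diag : ∀ i : Fin n, Wm i i = mu)
    (V : Matrix (Fin m) (Fin n) M)
    (U : Matrix (Fin m) (Fin n) M)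
    (hU : ∀ (p : Fin m) (q : Fin n), U p q = α.sum fun ij c =>
      c • ∑ r : Fin m, ∑ s : Fin n, ((Wl ^ ij.1) p r * (Wm ^ ij.2) s q) • V r s) :
    ∀ (p : Fin m) (q : Fin n),
      U p q - (α.sum fun ij c => c * lam ^ ij.1 * mu ^ ij.2) • V p q ∈
        Submodule.span k
          {x : M | ∃ (r : Fin m) (s : Fin n), p ≤ r ∧ s ≤ q ∧ (r, s) ≠ (p, q) ∧ x = V r s} := by
  intro p q
  have hl1 := fun i => (tri_pow_aux Wl hWl_tri hWl_diag i).1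
  have hl2 := fun i => (tri_pow_aux Wl hWl_tri hWl_diag i).2
  have hm1 := fun i => (tri_pow_aux Wm hWm_tri hWm_diag i).1
  have hm2 := fun i => (tri_pow_aux Wm hWm_tri hWm_diag i).2
  have hd : (α.sum fun ij c => c * lam ^ ij.1 * mu ^ ij.2) • V p q
      = α.sum fun ij c => (c * lam ^ ij.1 * mu ^ ij.2) • V p q := by
    rw [Finsupp.sum, Finsupp.sum, Finset.sum_smul]
  rw [hU, hd, Finsupp.sum, Finsupp.sum, ← Finset.sum_sub_distrib]
  apply Submodule.sum_mem
  rintro ⟨i, j⟩ _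
  set c := α (i, j)
  -- rewrite double sum, extract (p,q) term
  have hsum : (∑ r : Fin m, ∑ s : Fin n, ((Wl ^ i) p r * (Wm ^ j) s q) • V r s)
      = (lam ^ i * mu ^ j) • V p q
        + ∑ x ∈ (Finset.univ : Finset (Fin m × Fin n)).erase (p, q),
            ((Wl ^ i) p x.1 * (Wm ^ j) x.2 q) • V x.1 x.2 := by
    rw [← Finset.sum_product', Finset.univ_product_univ]
    rw [← Finset.add_sum_erase _ _ (Finset.mem_univ (p, q))]
    rw [hl2 i p, hm2 j q]
  rw [hsum, smul_add, smul_smul]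
  have : c * (lam ^ i * mu ^ j) = c * lam ^ i * mu ^ j := by ring
  rw [this, add_sub_cancel_left, Finset.smul_sum]
  apply Submodule.sum_mem
  rintro ⟨r, s⟩ hx
  rcases eq_or_ne ((Wl ^ i) p r * (Wm ^ j) s q) 0 with h0 | h0
  · rw [h0]; simp
  · have hr : p ≤ r := by
      by_contra h
      exact h0 (by rw [hl1 i p r (lt_of_not_ge h), zero_mul])
    have hs : s ≤ q := by
      by_contra h
      exact h0 (by rw [hm1 j s q (lt_of_not_ge h), mul_zero])
    apply Submodule.smul_mem
    apply Submodule.smul_mem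
    apply Submodule.subset_span
    exact ⟨r, s, hr, hs, Finset.ne_of_mem_erase hx, rfl⟩
end

section
/- Let k be an algebraically closed field, let f ∈ k[x, x₁, x̄₁] be a polynomial in three variables, and let ψ ∈ k[x, x₁] be a nonzero polynomial in two variables. Then the following are equivalent: (a) f is invertible in k[x, x₁, x̄₁][(ψ(x,x₁)·ψ(x,x̄₁))⁻¹], i.e. the image of f in the localization of k[x, x₁, x̄₁] at the powers of ψ(x,x₁)·ψ(x,x̄₁) is a unit; (b) for every λ ∈ k such that ψ(λ, x₁) ≠ 0 in k[x₁], the specialization f(λ, x₁, x̄₁) is invertible in k[x₁, x̄₁][(ψ(λ,x₁)·ψ(λ,x̄₁))⁻¹], i.e. its image in the localization of k[x₁, x̄₁] at the powers of ψ(λ,x₁)·ψ(λ,x̄₁) is a unit. -/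
/-!
Write `t = ψ(x,x₁)ψ(x,x̄₁)`; `f` is a unit in `k[x, x₁, x̄₁][t⁻¹]` iff `f ∣ tⁿ` for some `n`. Specializing
`x = λ` preserves divisibility, which gives one direction. Conversely, at a zero `(λ, a, b)` of
`f`, either `ψ(λ, x₁) = 0` and `t` vanishes there trivially, or `f(λ, x₁, x̄₁) ∣ t(λ)ⁿ` forces
`t(λ, a, b) = 0`; so `t` vanishes on the zero locus of `f`, and the Nullstellensatz puts a power
of `t` in `(f)`.
-/

open MvPolynomial

namespace MvPolynomial

theorem exists_dvd_pow_of_forall_eval_eq_zero {k σ : Type*} [Field k] [IsAlgClosed k] [Finite σ]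
    {f g : MvPolynomial σ k} (h : ∀ v : σ → k, eval v f = 0 → eval v g = 0) :
    ∃ m : ℕ, f ∣ g ^ m := by
  have hg : g ∈ (Ideal.span {f}).radical := by
    rw [← vanishingIdeal_zeroLocus_eq_radical (K := k)]
    exact fun v hv => h v (hv f (Ideal.mem_span_singleton_self f))
  obtain ⟨m, hm⟩ := hg
  exact ⟨m, Ideal.mem_span_singleton.mp hm⟩

theorem aeval_rename_pair {R S σ : Type*} [CommSemiring R] [CommSemiring S] [Algebra R S]
    (g : σ → S) (a b : σ) (p : MvPolynomial (Fin 2) R) :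
    aeval g (rename ![a, b] p) = aeval ![g a, g b] p := by
  rw [aeval_rename]
  congr 2
  funext i; fin_cases i <;> rfl

theorem eval_eq_eval_aeval_C_X {k : Type*} [CommSemiring k] (v : Fin 3 → k)
    (f : MvPolynomial (Fin 3) k) :
    eval v f = eval ![v 1, v 2] (aeval ![C (v 0), X 0, X 1] f) := by
  change aeval v f = aeval ![v 1, v 2] (aeval ![C (v 0), X 0, X 1] f)
  rw [comp_aeval_apply]
  congr 2
  funext i; fin_cases i <;> simp

end MvPolynomial

-- In `k[x, x₁, x̄₁]` the variables are `0 ↦ x`, `1 ↦ x₁`, `2 ↦ x̄₁`.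
theorem isUnit_localization_iff_specializations_general
    (k : Type*) [Field k] [IsAlgClosed k]
    (f : MvPolynomial (Fin 3) k) (ψ : MvPolynomial (Fin 2) k) :
    IsUnit (algebraMap (MvPolynomial (Fin 3) k)
        (Localization.Away
          ((rename ![(0 : Fin 3), 1] ψ) * (rename ![(0 : Fin 3), 2] ψ))) f)
      ↔
    ∀ lam : k,
      (aeval ![C lam, X 0] ψ : MvPolynomial (Fin 2) k) ≠ 0 →
      IsUnit (algebraMap (MvPolynomial (Fin 2) k)
        (Localization.Away
          ((aeval ![C lam, X 0] ψ : MvPolynomial (Fin 2) k) *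
            (aeval ![C lam, X 1] ψ : MvPolynomial (Fin 2) k)))
        (aeval ![C lam, X 0, X 1] f)) := by
  have specialize_denominator (lam : k) :
      aeval ![C lam, X 0, X 1] (rename ![(0 : Fin 3), 1] ψ * rename ![(0 : Fin 3), 2] ψ) =
        (aeval ![C lam, X 0] ψ : MvPolynomial (Fin 2) k) * aeval ![C lam, X 1] ψ := by
    rw [map_mul, aeval_rename_pair, aeval_rename_pair]
    rfl
  have isUnit_iff {n : ℕ} (t a : MvPolynomial (Fin n) k) :
      IsUnit (algebraMap _ (Localization.Away t) a) ↔ ∃ m, a ∣ t ^ m :=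
    IsLocalization.Away.algebraMap_isUnit_iff t
  simp only [isUnit_iff]
  constructor
  · rintro ⟨n, hdvd⟩ lam -
    refine ⟨n, ?_⟩
    have hspec := map_dvd (aeval ![C lam, X 0, X 1] : _ →ₐ[k] MvPolynomial (Fin 2) k) hdvd
    rwa [map_pow, specialize_denominator] at hspec
  · intro h
    refine exists_dvd_pow_of_forall_eval_eq_zero fun v hfv => ?_
    rw [eval_eq_eval_aeval_C_X, specialize_denominator, map_mul]
    by_cases hψ : (aeval ![C (v 0), X 0] ψ : MvPolynomial (Fin 2) k) = 0
    · rw [hψ, map_zero, zero_mul]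
    obtain ⟨n, hdvd⟩ := h (v 0) hψ
    have hev := map_dvd (eval ![v 1, v 2]) hdvd
    rw [← eval_eq_eval_aeval_C_X, hfv, zero_dvd_iff, map_pow, map_mul] at hev
    exact (pow_eq_zero_iff'.mp hev).1

/-- Let `k` be an algebraically closed field, `f ∈ k[x, x₁, x̄₁]` (variables
`0 ↦ x`, `1 ↦ x₁`, `2 ↦ x̄₁`) and `ψ ∈ k[x, x₁]` a nonzero polynomial. Then `f` is
invertible in `k[x, x₁, x̄₁][(ψ(x,x₁)ψ(x,x̄₁))⁻¹]` if and only if for every `λ ∈ k` with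
`ψ(λ, x₁) ≠ 0`, the specialization `f(λ, x₁, x̄₁)` is invertible in
`k[x₁, x̄₁][(ψ(λ,x₁)ψ(λ,x̄₁))⁻¹]`. -/
theorem isUnit_localization_iff_specializations
    (k : Type*) [Field k] [IsAlgClosed k]
    (f : MvPolynomial (Fin 3) k) (ψ : MvPolynomial (Fin 2) k) (hψ : ψ ≠ 0) :
    IsUnit (algebraMap (MvPolynomial (Fin 3) k)
        (Localization.Away
          ((rename ![(0 : Fin 3), 1] ψ) * (rename ![(0 : Fin 3), 2] ψ))) f)
      ↔
    ∀ lam : k,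
      (aeval ![C lam, X 0] ψ : MvPolynomial (Fin 2) k) ≠ 0 →
      IsUnit (algebraMap (MvPolynomial (Fin 2) k)
        (Localization.Away
          ((aeval ![C lam, X 0] ψ : MvPolynomial (Fin 2) k) *
            (aeval ![C lam, X 1] ψ : MvPolynomial (Fin 2) k)))
        (aeval ![C lam, X 0, X 1] f)) :=
  isUnit_localization_iff_specializations_general k f ψ
end

section
/- Let k be an algebraically closed field and let g, h ∈ k[x, y, z] be nonzero polynomials that are relatively prime, i.e. every common divisor of g and h in k[x, y, z] is a unit. Then the set of λ ∈ k for which the specializations g(λ, y, z) and h(λ, y, z) are not relatively prime in k[y, z] is finite; equivalently, there is a co-finite subset L ⊆ k such that for every λ ∈ L, every common divisor of g(λ, y, z) and h(λ, y, z) in k[y, z] is a unit. -/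
/-!
Eliminating `z`, resp. `y`, from the relatively prime pair `g, h` gives nonzero polynomials
`c₁(x, y)` and `c₂(x, z)` in the ideal `(g, h)`: by Gauss's lemma `g` and `h` stay relatively
prime in `K[z]`, `K` the fraction field of `k[x, y]`, and clearing denominators in a Bézout
identity there yields `c₁`. For all but finitely many `λ` both `c₁(λ, y)` and `c₂(λ, z)` are
nonzero, and a common divisor of `g(λ, y, z)` and `h(λ, y, z)` divides both of them, so it
involves neither `y` nor `z`: it is a nonzero constant.
-/

open MvPolynomial

namespace Polynomial

variable {R K : Type*} [CommRing R] [IsDomain R] [IsGCDMonoid R] [Field K] [Algebra R K]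
  [IsFractionRing R K]

open IsLocalization in
theorem IsRelPrime.map_fractionRing {G H : R[X]} (hGH : IsRelPrime G H) :
    IsRelPrime (G.map (algebraMap R K)) (H.map (algebraMap R K)) := by
  let : NormalizedGCDMonoid R := Nonempty.some inferInstance
  have hinj := IsFractionRing.injective R K
  intro d hdG hdH
  have hd : d ≠ 0 := by
    rintro rfl
    rw [zero_dvd_iff, Polynomial.map_eq_zero_iff hinj] at hdG hdH
    exact not_isRelPrime_zero_zero (hdG ▸ hdH ▸ hGH)
  -- `p` is `d` with its denominators cleared and its content removed
  set p := (integerNormalization (nonZeroDivisors R) d).primPart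
  have hpd : p.map (algebraMap R K) ∣ d := by
    obtain ⟨b, hb0, hb⟩ := integerNormalization_spec (nonZeroDivisors R) d
    have hb' : IsUnit (C (algebraMap R K b)) :=
      (IsFractionRing.to_map_ne_zero_of_mem_nonZeroDivisors hb0).isUnit.map C
    rw [← hb'.dvd_mul_left, ← smul_eq_C_mul, algebraMap_smul, ← hb,
      (integerNormalization _ d).eq_C_content_mul_primPart, Polynomial.map_mul]
    exact dvd_mul_left _ _
  have hp := isPrimitive_primPart (integerNormalization (nonZeroDivisors R) d)
  exact isUnit_or_eq_zero_of_isUnit_integerNormalization_primPart hd <|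
    hGH (hp.dvd_of_fraction_map_dvd_fraction_map (hpd.trans hdG))
      (hp.dvd_of_fraction_map_dvd_fraction_map (hpd.trans hdH))

open IsLocalization in
theorem IsRelPrime.exists_C_mem_span_pair {G H : R[X]} (hGH : IsRelPrime G H) :
    ∃ c : R, c ≠ 0 ∧ C c ∈ Ideal.span {G, H} := by
  let K := FractionRing R
  have hinj := IsFractionRing.injective R K
  obtain ⟨u, v, huv⟩ := (IsRelPrime.map_fractionRing (K := K) hGH).isCoprime
  obtain ⟨b, hb0, hb⟩ := integerNormalization_spec (nonZeroDivisors R) u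
  obtain ⟨c, hc0, hc⟩ := integerNormalization_spec (nonZeroDivisors R) v
  refine ⟨b * c, mul_ne_zero (nonZeroDivisors.ne_zero hb0) (nonZeroDivisors.ne_zero hc0),
    Ideal.mem_span_pair.mpr ⟨C c * integerNormalization (nonZeroDivisors R) u,
      C b * integerNormalization (nonZeroDivisors R) v,
      map_injective _ hinj ?_⟩⟩
  rw [← algebraMap_smul K, smul_eq_C_mul] at hb hc
  simp only [Polynomial.map_add, Polynomial.map_mul, Polynomial.map_C, hb, hc, map_mul]
  linear_combination (C (algebraMap R K b) * C (algebraMap R K c)) * huv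

end Polynomial

open scoped Polynomial

namespace MvPolynomial

variable {σ R : Type*} [CommRing R]

theorem exists_mem_span_pair_ne_zero_notMem_vars [IsDomain R] [UniqueFactorizationMonoid R]
    {g h : MvPolynomial σ R} (hgh : IsRelPrime g h) (i : σ) :
    ∃ c ∈ Ideal.span {g, h}, c ≠ 0 ∧ i ∉ c.vars := by
  classical
  let e : MvPolynomial σ R ≃ₐ[R] (MvPolynomial {j // j ≠ i} R)[X] :=
    (renameEquiv R (Equiv.optionSubtypeNe i).symm).trans (optionEquivLeft R _)
  have he : e.symm.toAlgHom.comp Polynomial.CAlgHom = rename Subtype.val := by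
    ext; simp [e]
  obtain ⟨a, ha0, ha⟩ := Polynomial.IsRelPrime.exists_C_mem_span_pair
    (G := e g) (H := e h) (IsRelPrime.of_map e.symm (by simpa using hgh))
  refine ⟨rename Subtype.val a, ?_, ?_, ?_⟩
  · rw [← he, AlgHom.comp_apply, Polynomial.CAlgHom_apply, AlgEquiv.coe_toAlgHom]
    obtain ⟨u, v, huv⟩ := Ideal.mem_span_pair.mp ha
    exact Ideal.mem_span_pair.mpr ⟨e.symm u, e.symm v, by simp [← huv]⟩
  · exact (rename_injective _ Subtype.val_injective).ne_iff.mpr ha0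
  · intro hi
    obtain ⟨j, -, hj⟩ := Finset.mem_image.mp (vars_rename _ _ hi)
    exact j.2 hj

theorem vars_subset_of_dvd [IsDomain R] {d p : MvPolynomial σ R} (hdp : d ∣ p) (hp : p ≠ 0) :
    d.vars ⊆ p.vars := by
  classical
  obtain ⟨e, rfl⟩ := hdp
  rw [vars_def, vars_def, degrees_mul_eq (left_ne_zero_of_mul hp) (right_ne_zero_of_mul hp),
    Multiset.toFinset_add]
  exact Finset.subset_union_left

theorem isUnit_of_dvd_of_dvd_of_disjoint_vars {k : Type*} [Field k] {d p q : MvPolynomial σ k}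
    (hp : p ≠ 0) (hq : q ≠ 0) (hdp : d ∣ p) (hdq : d ∣ q) (hpq : Disjoint p.vars q.vars) :
    IsUnit d := by
  have hvars : d.vars = ∅ :=
    Finset.subset_empty.mp <| hpq (vars_subset_of_dvd hdp hp) (vars_subset_of_dvd hdq hq)
  rw [vars_eq_empty_iff_eq_C.mp hvars]
  refine (Ne.isUnit fun h0 => hp ?_).map C
  rwa [vars_eq_empty_iff_eq_C.mp hvars, h0, C_0, zero_dvd_iff] at hdp

section Specialization

variable {n : ℕ}

theorem aeval_cons_C_eq_eval_finSuccEquiv (a : R) (p : MvPolynomial (Fin (n + 1)) R) :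
    aeval (Fin.cons (C a) X : Fin (n + 1) → MvPolynomial (Fin n) R) p =
      Polynomial.eval (C a) (finSuccEquiv R n p) := by
  have h : aeval (Fin.cons (C a) X : Fin (n + 1) → MvPolynomial (Fin n) R) =
      ((Polynomial.aeval (C a)).restrictScalars R).comp (finSuccEquiv R n).toAlgHom :=
    algHom_ext (Fin.cases (by simp [finSuccEquiv_X_zero]) fun j => by simp [finSuccEquiv_X_succ])
  rw [h]
  rfl

theorem finite_setOf_aeval_cons_C_eq_zero [IsDomain R] {p : MvPolynomial (Fin (n + 1)) R}
    (hp : p ≠ 0) :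
    {a : R | aeval (Fin.cons (C a) X : Fin (n + 1) → MvPolynomial (Fin n) R) p = 0}.Finite := by
  simp_rw [aeval_cons_C_eq_eval_finSuccEquiv]
  exact (Polynomial.finite_setOfPred_isRoot
    ((finSuccEquiv R n).injective.ne_iff' (map_zero _) |>.mpr hp)).preimage
    (C_injective _ _).injOn

theorem succ_mem_vars_of_mem_vars_aeval_cons_C [Nontrivial R] {a : R}
    {p : MvPolynomial (Fin (n + 1)) R} {j : Fin n}
    (hj : j ∈ (aeval (Fin.cons (C a) X : Fin (n + 1) → MvPolynomial (Fin n) R) p).vars) :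
    j.succ ∈ p.vars := by
  classical
  rw [aeval_eq_bind₁] at hj
  obtain ⟨i, hi, hji⟩ := Finset.mem_biUnion.mp (vars_bind₁ _ _ hj)
  cases i using Fin.cases with
  | zero => simp [vars_C] at hji
  | succ i =>
    rw [Fin.cons_succ, vars_X, Finset.mem_singleton] at hji
    rwa [hji]

end Specialization

end MvPolynomial

theorem Ideal.dvd_map_of_mem_span_pair {A B F : Type*} [CommSemiring A] [CommSemiring B]
    [FunLike F A B] [RingHomClass F A B] (f : F) {d : B} {a b x : A} (ha : d ∣ f a)
    (hb : d ∣ f b) (hx : x ∈ Ideal.span {a, b}) : d ∣ f x := by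
  obtain ⟨u, v, rfl⟩ := Ideal.mem_span_pair.mp hx
  rw [map_add, map_mul, map_mul]
  exact dvd_add (dvd_mul_of_dvd_right ha _) (dvd_mul_of_dvd_right hb _)

theorem finite_not_coprime_specializations_general
    (k : Type*) [Field k]
    (g h : MvPolynomial (Fin 3) k)
    (hcop : ∀ d : MvPolynomial (Fin 3) k, d ∣ g → d ∣ h → IsUnit d) :
    {lam : k | ¬ ∀ d : MvPolynomial (Fin 2) k,
        d ∣ aeval ![C lam, X 0, X 1] g →
        d ∣ aeval ![C lam, X 0, X 1] h → IsUnit d}.Finite := by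
  have hspec : ∀ lam : k,
      ![C lam, X 0, X 1] = (Fin.cons (C lam) X : Fin 3 → MvPolynomial (Fin 2) k) :=
    fun lam => funext fun i => by fin_cases i <;> rfl
  simp_rw [hspec]
  -- `c₁ ∈ (g, h)` is free of `z` and `c₂ ∈ (g, h)` is free of `y`
  obtain ⟨c₁, hc₁, hc₁0, hc₁z⟩ := exists_mem_span_pair_ne_zero_notMem_vars (fun d => hcop d) 2
  obtain ⟨c₂, hc₂, hc₂0, hc₂y⟩ := exists_mem_span_pair_ne_zero_notMem_vars (fun d => hcop d) 1
  refine ((finite_setOf_aeval_cons_C_eq_zero hc₁0).union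
    (finite_setOf_aeval_cons_C_eq_zero hc₂0)).subset fun lam hlam => ?_
  by_contra hnonzero
  simp only [Set.mem_union, Set.mem_ofPred_eq, not_or] at hnonzero hlam
  refine hlam fun d hdg hdh => isUnit_of_dvd_of_dvd_of_disjoint_vars hnonzero.1 hnonzero.2
    (Ideal.dvd_map_of_mem_span_pair _ hdg hdh hc₁) (Ideal.dvd_map_of_mem_span_pair _ hdg hdh hc₂)
    (Finset.disjoint_left.mpr fun j hj₁ hj₂ => ?_)
  fin_cases j
  · exact hc₂y (succ_mem_vars_of_mem_vars_aeval_cons_C hj₂)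
  · exact hc₁z (succ_mem_vars_of_mem_vars_aeval_cons_C hj₁)

/-- Let `k` be an algebraically closed field and `g, h ∈ k[x, y, z]` (variables
`0 ↦ x`, `1 ↦ y`, `2 ↦ z`) nonzero polynomials that are relatively prime (every common
divisor is a unit). Then the set of `λ ∈ k` for which the specializations `g(λ, y, z)`
and `h(λ, y, z)` are not relatively prime in `k[y, z]` is finite. -/
theorem finite_not_coprime_specializations
    (k : Type*) [Field k] [IsAlgClosed k]
    (g h : MvPolynomial (Fin 3) k) (hg : g ≠ 0) (hh : h ≠ 0)
    (hcop : ∀ d : MvPolynomial (Fin 3) k, d ∣ g → d ∣ h → IsUnit d) :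
    {lam : k | ¬ ∀ d : MvPolynomial (Fin 2) k,
        d ∣ aeval ![C lam, X 0, X 1] g →
        d ∣ aeval ![C lam, X 0, X 1] h → IsUnit d}.Finite :=
  finite_not_coprime_specializations_general k g h hcop
end
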